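/- Let T be a tree, let v be a support vertex of T having at least two leaf-neighbors, and let u be a leaf-neighbor of v. If T' is the tree obtained from T by deleting u, then γ_t2(T') = γ_t2(T). -/

import Mathlib

open SimpleGraph

/-- A dominating set: every vertex outside `S` has a neighbor in `S`. -/
def IsDominatingSet {V : Type} (G : SimpleGraph V) (S : Set V) : Prop :=
  ∀ v ∉ S, ∃ u ∈ S, G.Adj u v

/-- A total dominating set: every vertex has a neighbor in `S`. -/
def IsTotalDominatingSet {V : Type} (G : SimpleGraph V) (S : Set V) : Prop :=
  ∀ v : V, ∃ u ∈ S, G.Adj u v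

/-- `u` is within distance two of `v`. -/
def WithinTwo {V : Type} (G : SimpleGraph V) (u v : V) : Prop :=
  G.Adj u v ∨ ∃ w, G.Adj u w ∧ G.Adj w v

/-- A semitotal dominating set: a dominating set in which every vertex is within
distance two of another vertex of the set. -/
def IsSemitotalDominatingSet {V : Type} (G : SimpleGraph V) (S : Set V) : Prop :=
  IsDominatingSet G S ∧ ∀ v ∈ S, ∃ u ∈ S, u ≠ v ∧ WithinTwo G u v

/-- The domination number `γ(G)`. -/
noncomputable def dominationNumber {V : Type} (G : SimpleGraph V) : ℕ :=
  sInf {n | ∃ S : Set V, IsDominatingSet G S ∧ S.ncard = n}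

/-- The total domination number `γ_t(G)`. -/
noncomputable def totalDominationNumber {V : Type} (G : SimpleGraph V) : ℕ :=
  sInf {n | ∃ S : Set V, IsTotalDominatingSet G S ∧ S.ncard = n}

/-- The semitotal domination number `γ_t2(G)`. -/
noncomputable def semitotalDominationNumber {V : Type} (G : SimpleGraph V) : ℕ :=
  sInf {n | ∃ S : Set V, IsSemitotalDominatingSet G S ∧ S.ncard = n}

/-- A leaf: a vertex of degree one. -/
def IsLeaf {V : Type} (G : SimpleGraph V) (v : V) : Prop :=
  (G.neighborSet v).ncard = 1

/-- A support vertex: a vertex adjacent to a leaf. -/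
def IsSupport {V : Type} (G : SimpleGraph V) (v : V) : Prop :=
  ∃ u, G.Adj v u ∧ IsLeaf G u

/-- A star: a graph isomorphic to `K_{1,m}` for some `m ≥ 1`. -/
def IsStar {V : Type} (G : SimpleGraph V) : Prop :=
  ∃ m : ℕ, 1 ≤ m ∧ Nonempty (G ≃g completeBipartiteGraph Unit (Fin m))

/-- The graph obtained from the disjoint union of `G` and `H` by adding
the single edge joining `v : V` to `w : W`. -/
def attach {V W : Type} (G : SimpleGraph V) (H : SimpleGraph W) (v : V) (w : W) :
    SimpleGraph (V ⊕ W) where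
  Adj x y :=
    match x, y with
    | Sum.inl a, Sum.inl b => G.Adj a b
    | Sum.inr a, Sum.inr b => H.Adj a b
    | Sum.inl a, Sum.inr b => a = v ∧ b = w
    | Sum.inr a, Sum.inl b => b = v ∧ a = w
  symm := ⟨by
    rintro (a | a) (b | b) h
    · exact G.adj_symm h
    · exact ⟨h.1, h.2⟩
    · exact ⟨h.1, h.2⟩
    · exact H.adj_symm h⟩
  loopless := ⟨by
    rintro (a | a) h
    · exact G.irrefl h
    · exact H.irrefl h⟩

/-- The statuses used to label the vertices of trees in the family `𝒯`. -/
inductive Label : Type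
  | A | B | C
deriving DecidableEq

/-- The labeling of the path `P₅` assigning `A` to the two support vertices,
`C` to the two leaves and `B` to the center. -/
def pathLabel : Fin 5 → Label
  | 0 => Label.C
  | 1 => Label.A
  | 2 => Label.B
  | 3 => Label.A
  | 4 => Label.C

/-- The family `𝒯` of labeled trees: it contains the labeled path `P₅`, and is closed
under operation `𝒪₁` (attach a new leaf labeled `C` to a vertex labeled `A`), operation
`𝒪₂` (attach a labeled path `P₅` to a degree-one vertex labeled `C`), and under
isomorphism of labeled graphs. -/
inductive TFamily : ∀ {V : Type}, SimpleGraph V → (V → Label) → Prop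
  | base : TFamily (SimpleGraph.pathGraph 5) pathLabel
  | op1 {V : Type} {G : SimpleGraph V} {f : V → Label} (v : V)
      (hv : f v = Label.A) (h : TFamily G f) :
      TFamily (attach G (⊥ : SimpleGraph (Fin 1)) v 0)
        (Sum.elim f (fun _ => Label.C))
  | op2 {V : Type} {G : SimpleGraph V} {f : V → Label} (v : V)
      (hv : f v = Label.C) (hdeg : (G.neighborSet v).ncard = 1) (h : TFamily G f) :
      TFamily (attach G (SimpleGraph.pathGraph 5) v 0) (Sum.elim f pathLabel)
  | iso {V W : Type} {G : SimpleGraph V} {H : SimpleGraph W} {f : V → Label}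
      (e : G ≃g H) (h : TFamily G f) : TFamily H (fun w => f (e.symm w))

/-- The subdivided star with `t` leaves: center `none`, and for each `i : Fin t`
a path `none — some (i,0) — some (i,1)`. -/
def subdividedStar (t : ℕ) : SimpleGraph (Option (Fin t × Fin 2)) :=
  SimpleGraph.fromRel (fun x y =>
    match x, y with
    | none, some p => p.2 = 0
    | some p, some q => p.1 = q.1 ∧ p.2 = 0 ∧ q.2 = 1
    | _, _ => False)

/-- The tree `Y` with three leaves, obtained from the star `K_{1,3}` with center `0`
by subdividing exactly one edge: edges `0-1`, `0-2`, `0-3`, `3-4`.  Its leaves are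
`1`, `2`, `4`; the leaf-neighbors of the center are `1` and `2`. -/
def Ytree : SimpleGraph (Fin 5) :=
  SimpleGraph.fromRel (fun x y =>
    (x = 0 ∧ y = 1) ∨ (x = 0 ∧ y = 2) ∨ (x = 0 ∧ y = 3) ∨ (x = 3 ∧ y = 4))

/-- An almost dominating set of `G` relative to `v`: dominates every vertex except
possibly `v`. -/
def IsAlmostDominatingSet {V : Type} (G : SimpleGraph V) (v : V) (S : Set V) : Prop :=
  ∀ w, w ≠ v → w ∉ S → ∃ u ∈ S, G.Adj u w

/-- The almost domination number `γ(G; v)`. -/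
noncomputable def almostDominationNumber {V : Type} (G : SimpleGraph V) (v : V) : ℕ :=
  sInf {n | ∃ S : Set V, IsAlmostDominatingSet G v S ∧ S.ncard = n}

/-- The family `𝒪` of trees: all trees obtainable from the path `P₄` by a finite
sequence of the operations `𝒪₁`–`𝒪₄` (and taking isomorphic copies). -/
inductive OFamily : ∀ {V : Type}, SimpleGraph V → Prop
  | base : OFamily (SimpleGraph.pathGraph 4)
  | op1 {V : Type} {G : SimpleGraph V} (v : V)
      (hv : ∃ S : Set V, IsSemitotalDominatingSet G S ∧
        S.ncard = semitotalDominationNumber G ∧ v ∈ S)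
      (h : OFamily G) :
      OFamily (attach G (⊥ : SimpleGraph (Fin 1)) v 0)
  | op2short {V : Type} {G : SimpleGraph V} (v : V)
      (hv : almostDominationNumber G v = dominationNumber G) (h : OFamily G) :
      OFamily (attach G (SimpleGraph.pathGraph 2) v 0)
  | op2long {V : Type} {G : SimpleGraph V} (v : V)
      (hv : almostDominationNumber G v = dominationNumber G) (h : OFamily G) :
      OFamily (attach G (SimpleGraph.pathGraph 5) v 0)
  | op3 {V : Type} {G : SimpleGraph V} (v : V) (t : ℕ) (ht : 2 ≤ t) (h : OFamily G) :
      OFamily (attach G (subdividedStar t) v none)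
  | op4 {V : Type} {G : SimpleGraph V} (v : V) (h : OFamily G) :
      OFamily (attach G Ytree v 1)
  | iso {V W : Type} {G : SimpleGraph V} {H : SimpleGraph W}
      (e : G ≃g H) (h : OFamily G) : OFamily H

/-! Let `u`, `w` be two leaves at `v`. A semitotal dominating set of `T` containing `u` can trade
`u` for `v`, or for `w` when `v` is already in the set; avoiding `u`, it stays semitotal dominating
in `T - u`. Conversely, a semitotal dominating set of `T - u` without `v` must contain `w`, which it
can trade for `v`; then it also dominates `u` in `T`. Neither exchange increases the cardinality. -/

theorem Set.ncard_insert_sdiff_singleton_le {α : Type*} {s : Set α} {a b : α} (hb : b ∈ s) :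
    (insert a (s \ {b})).ncard ≤ s.ncard := by
  by_cases ha : a ∈ s \ {b}
  · rw [Set.insert_eq_of_mem ha]
    exact Set.ncard_sdiff_singleton_le s b
  · obtain rfl | hab := eq_or_ne a b
    · rw [Set.insert_sdiff_singleton, Set.insert_eq_of_mem hb]
    · exact (Set.ncard_exchange (fun has => ha ⟨has, hab⟩) hb).le

theorem Nat.sInf_eq_sInf_of_forall_exists_le {A B : Set ℕ}
    (hAB : ∀ a ∈ A, ∃ b ∈ B, b ≤ a) (hBA : ∀ b ∈ B, ∃ a ∈ A, a ≤ b) : sInf A = sInf B := by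
  rcases A.eq_empty_or_nonempty with rfl | hA
  · have hB : B = ∅ := Set.eq_empty_of_forall_notMem fun b hb => by
      obtain ⟨a, ha, -⟩ := hBA b hb
      exact ha
    rw [hB]
  · obtain ⟨b, hb, hba⟩ := hAB _ (Nat.sInf_mem hA)
    obtain ⟨a, ha, hab⟩ := hBA _ (Nat.sInf_mem ⟨b, hb⟩)
    exact le_antisymm ((Nat.sInf_le ha).trans hab) ((Nat.sInf_le hb).trans hba)

section

variable {V : Type} {G : SimpleGraph V}

theorem IsLeaf.adj_iff_eq {u v : V} (hu : IsLeaf G u) (huv : G.Adj u v) (x : V) :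
    G.Adj u x ↔ x = v := by
  obtain ⟨a, ha⟩ := Set.ncard_eq_one.mp hu
  have hnbr (y : V) : G.Adj u y ↔ y = a := by
    rw [← SimpleGraph.mem_neighborSet, ha, Set.mem_singleton_iff]
  rw [hnbr, (hnbr v).mp huv]

theorem WithinTwo.symm {a b : V} : WithinTwo G a b → WithinTwo G b a
  | .inl h => .inl h.symm
  | .inr ⟨m, ham, hmb⟩ => .inr ⟨m, hmb.symm, ham.symm⟩

theorem WithinTwo.map {W : Type} {H : SimpleGraph W} (f : G →g H) {a b : V} :
    WithinTwo G a b → WithinTwo H (f a) (f b)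
  | .inl h => .inl (f.map_adj h)
  | .inr ⟨m, ham, hmb⟩ => .inr ⟨f m, f.map_adj ham, f.map_adj hmb⟩

theorem WithinTwo.eq_or_adj_of_forall_adj_iff {w v s : V} (hw : ∀ x, G.Adj w x ↔ x = v)
    (h : WithinTwo G w s) : s = v ∨ G.Adj v s := by
  rcases h with h | ⟨m, hwm, hms⟩
  · exact .inl ((hw s).mp h)
  · exact .inr ((hw m).mp hwm ▸ hms)

theorem IsDominatingSet.mem_of_forall_adj_iff {S : Set V} {w v : V} (hS : IsDominatingSet G S)
    (hw : ∀ x, G.Adj w x ↔ x = v) (hvS : v ∉ S) : w ∈ S := by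
  by_contra hwS
  obtain ⟨y, hyS, hyw⟩ := hS w hwS
  exact hvS ((hw y).mp hyw.symm ▸ hyS)

namespace IsSemitotalDominatingSet

variable {S : Set V}

theorem insert_sdiff_leaf {w v : V} (hS : IsSemitotalDominatingSet G S)
    (hw : ∀ x, G.Adj w x ↔ x = v) (hvS : v ∉ S) :
    IsSemitotalDominatingSet G (insert v (S \ {w})) := by
  have hwS : w ∈ S := hS.1.mem_of_forall_adj_iff hw hvS
  refine ⟨fun x hx => ?_, fun s hs => ?_⟩
  · obtain rfl | hxw := eq_or_ne x w
    · exact ⟨v, Set.mem_insert _ _, ((hw v).mpr rfl).symm⟩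
    obtain ⟨y, hyS, hyx⟩ := hS.1 x fun hxS => hx (.inr ⟨hxS, hxw⟩)
    obtain rfl | hyw := eq_or_ne y w
    · exact absurd (.inl ((hw x).mp hyx)) hx
    · exact ⟨y, .inr ⟨hyS, hyw⟩, hyx⟩
  rcases hs with rfl | ⟨hsS, hsw⟩
  · obtain ⟨p, hpS, hpw, hp⟩ := hS.2 w hwS
    have hps : p ≠ s := fun h => hvS (h ▸ hpS)
    refine ⟨p, .inr ⟨hpS, hpw⟩, hps, ?_⟩
    exact .inl ((hp.symm.eq_or_adj_of_forall_adj_iff hw).resolve_left hps).symm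
  · obtain ⟨p, hpS, hps, hp⟩ := hS.2 s hsS
    obtain rfl | hpw := eq_or_ne p w
    · have hvs : G.Adj v s :=
        (hp.eq_or_adj_of_forall_adj_iff hw).resolve_left fun h => hvS (h ▸ hsS)
      exact ⟨v, Set.mem_insert _ _, hvs.ne, .inl hvs⟩
    · exact ⟨p, .inr ⟨hpS, hpw⟩, hps, hp⟩

theorem insert_sdiff_leaf_of_support_mem {u v w : V} (hS : IsSemitotalDominatingSet G S)
    (hu : ∀ x, G.Adj u x ↔ x = v) (hvw : G.Adj v w) (hwu : w ≠ u) (hvS : v ∈ S) :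
    IsSemitotalDominatingSet G (insert w (S \ {u})) := by
  have hvu : v ≠ u := ((hu v).mpr rfl).ne'
  have hv : v ∈ insert w (S \ {u}) := .inr ⟨hvS, hvu⟩
  refine ⟨fun x hx => ?_, fun s hs => ?_⟩
  · obtain rfl | hxu := eq_or_ne x u
    · exact ⟨v, hv, ((hu v).mpr rfl).symm⟩
    obtain ⟨y, hyS, hyx⟩ := hS.1 x fun hxS => hx (.inr ⟨hxS, hxu⟩)
    obtain rfl | hyu := eq_or_ne y u
    · exact absurd ((hu x).mp hyx ▸ hv) hx
    · exact ⟨y, .inr ⟨hyS, hyu⟩, hyx⟩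
  rcases hs with rfl | ⟨hsS, hsu⟩
  · exact ⟨v, hv, hvw.ne, .inl hvw⟩
  obtain ⟨p, hpS, hps, hp⟩ := hS.2 s hsS
  obtain rfl | hpu := eq_or_ne p u
  · rcases hp.eq_or_adj_of_forall_adj_iff hu with rfl | hvs
    · exact ⟨w, .inl rfl, hvw.ne', .inl hvw.symm⟩
    · exact ⟨v, hv, hvs.ne, .inl hvs⟩
  · exact ⟨p, .inr ⟨hpS, hpu⟩, hps, hp⟩

theorem exists_support_mem {w v : V} (hS : IsSemitotalDominatingSet G S)
    (hw : ∀ x, G.Adj w x ↔ x = v) :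
    ∃ S₁, IsSemitotalDominatingSet G S₁ ∧ v ∈ S₁ ∧ S₁.ncard ≤ S.ncard := by
  by_cases hvS : v ∈ S
  · exact ⟨S, hS, hvS, le_rfl⟩
  · exact ⟨_, hS.insert_sdiff_leaf hw hvS, Set.mem_insert _ _,
      Set.ncard_insert_sdiff_singleton_le (hS.1.mem_of_forall_adj_iff hw hvS)⟩

theorem exists_leaf_notMem {u v w : V} (hS : IsSemitotalDominatingSet G S)
    (hu : ∀ x, G.Adj u x ↔ x = v) (hvw : G.Adj v w) (hwu : w ≠ u) :
    ∃ S₁, IsSemitotalDominatingSet G S₁ ∧ u ∉ S₁ ∧ S₁.ncard ≤ S.ncard := by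
  by_cases huS : u ∈ S
  · by_cases hvS : v ∈ S
    · exact ⟨_, hS.insert_sdiff_leaf_of_support_mem hu hvw hwu hvS,
        fun h => h.elim hwu.symm fun h => h.2 rfl, Set.ncard_insert_sdiff_singleton_le huS⟩
    · exact ⟨_, hS.insert_sdiff_leaf hu hvS,
        fun h => h.elim ((hu v).mpr rfl).ne fun h => h.2 rfl,
        Set.ncard_insert_sdiff_singleton_le huS⟩
  · exact ⟨S, hS, huS, le_rfl⟩

/-- Since `u` has a single neighbour, it is never the middle vertex of a path between two
distinct vertices, so deleting `u ∉ S` keeps `S` semitotal. -/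
theorem preimage_val_induce_ne {u v : V} (hS : IsSemitotalDominatingSet G S)
    (hu : ∀ x, G.Adj u x ↔ x = v) (huS : u ∉ S) :
    IsSemitotalDominatingSet (G.induce {x | x ≠ u}) (Subtype.val ⁻¹' S) := by
  refine ⟨fun x hx => ?_, fun x hx => ?_⟩
  · obtain ⟨y, hyS, hyx⟩ := hS.1 x hx
    exact ⟨⟨y, fun h => huS (h ▸ hyS)⟩, hyS, hyx⟩
  obtain ⟨p, hpS, hpx, hp⟩ := hS.2 x hx
  refine ⟨⟨p, fun h => huS (h ▸ hpS)⟩, hpS, fun h => hpx (congrArg Subtype.val h), ?_⟩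
  rcases hp with h | ⟨m, hpm, hmx⟩
  · exact .inl h
  have hmu : m ≠ u := by
    rintro rfl
    exact hpx (((hu p).mp hpm.symm).trans ((hu x).mp hmx).symm)
  exact .inr ⟨⟨m, hmu⟩, hpm, hmx⟩

theorem image_val {s : Set V} {S : Set s} (hS : IsSemitotalDominatingSet (G.induce s) S)
    (hout : ∀ x ∉ s, ∃ y ∈ S, G.Adj y x) :
    IsSemitotalDominatingSet G (Subtype.val '' S) := by
  refine ⟨fun x hx => ?_, ?_⟩
  · by_cases hxs : x ∈ s
    · obtain ⟨y, hyS, hyx⟩ := hS.1 ⟨x, hxs⟩ fun h => hx ⟨_, h, rfl⟩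
      exact ⟨y, ⟨y, hyS, rfl⟩, hyx⟩
    · obtain ⟨y, hyS, hyx⟩ := hout x hxs
      exact ⟨y, ⟨y, hyS, rfl⟩, hyx⟩
  · rintro _ ⟨x, hx, rfl⟩
    obtain ⟨p, hpS, hpx, hp⟩ := hS.2 x hx
    exact ⟨p, ⟨p, hpS, rfl⟩, Subtype.coe_injective.ne hpx, hp.map (Embedding.induce s).toHom⟩

end IsSemitotalDominatingSet

theorem semitotalDominationNumber_eq_of_forall_exists_le {W : Type} {H : SimpleGraph W}
    (hGH : ∀ S, IsSemitotalDominatingSet G S →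
      ∃ S' : Set W, IsSemitotalDominatingSet H S' ∧ S'.ncard ≤ S.ncard)
    (hHG : ∀ S', IsSemitotalDominatingSet H S' →
      ∃ S : Set V, IsSemitotalDominatingSet G S ∧ S.ncard ≤ S'.ncard) :
    semitotalDominationNumber G = semitotalDominationNumber H := by
  apply Nat.sInf_eq_sInf_of_forall_exists_le
  · rintro _ ⟨S, hS, rfl⟩
    obtain ⟨S', hS', hle⟩ := hGH S hS
    exact ⟨_, ⟨S', hS', rfl⟩, hle⟩
  · rintro _ ⟨S', hS', rfl⟩
    obtain ⟨S, hS, hle⟩ := hHG S' hS'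
    exact ⟨_, ⟨S, hS, rfl⟩, hle⟩

end

theorem semitotal_delete_extra_leaf_general {V : Type} (T : SimpleGraph V)
    (v u : V) (huv : T.Adj v u) (hu : IsLeaf T u)
    (h2 : 2 ≤ {w : V | T.Adj v w ∧ IsLeaf T w}.ncard) :
    semitotalDominationNumber (T.induce {w : V | w ≠ u}) = semitotalDominationNumber T := by
  obtain ⟨w, ⟨hvw, hw⟩, hwu⟩ := Set.exists_ne_of_one_lt_ncard h2 u
  have hu_nbr := hu.adj_iff_eq huv.symm
  have hw_nbr := hw.adj_iff_eq hvw.symm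
  have hvu : v ≠ u := huv.ne
  apply semitotalDominationNumber_eq_of_forall_exists_le
  · intro S hS
    have hw_nbr' (x : {x // x ≠ u}) : (T.induce {x | x ≠ u}).Adj ⟨w, hwu⟩ x ↔ x = ⟨v, hvu⟩ := by
      rw [Subtype.ext_iff]; exact hw_nbr x
    obtain ⟨S₁, hS₁, hvS₁, hle⟩ := hS.exists_support_mem hw_nbr'
    refine ⟨_, hS₁.image_val fun x hx => ⟨⟨v, hvu⟩, hvS₁, by rwa [of_not_not hx]⟩, ?_⟩
    rwa [Set.ncard_image_of_injective _ Subtype.coe_injective]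
  · intro S hS
    obtain ⟨S₁, hS₁, huS₁, hle⟩ := hS.exists_leaf_notMem hu_nbr hvw hwu
    refine ⟨_, hS₁.preimage_val_induce_ne hu_nbr huS₁, ?_⟩
    rwa [Set.ncard_preimage_of_injective_subset_range Subtype.coe_injective
      fun x hx => ⟨⟨x, by rintro rfl; exact huS₁ hx⟩, rfl⟩]

/-- Removing a leaf-neighbor of a support vertex having at least two
leaf-neighbors does not change the semitotal domination number. -/
theorem semitotal_delete_extra_leaf {V : Type} [Fintype V] (T : SimpleGraph V)
    (hT : T.IsTree) (v u : V) (huv : T.Adj v u) (hu : IsLeaf T u)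
    (h2 : 2 ≤ {w : V | T.Adj v w ∧ IsLeaf T w}.ncard) :
    semitotalDominationNumber (T.induce {w : V | w ≠ u}) = semitotalDominationNumber T :=
  semitotal_delete_extra_leaf_general T v u huv hu h2
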